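/- In g̃ = sl(n+3,ℝ), let ñ^{1,F} be the subspace of matrices (block sizes (2,1,n)) with only the (1,3)-block and the (2,3)-block possibly nonzero (i.e. ñ₁^F ⊕ ñ₂ in the grading of Convention 6.2), and set μ = (0,0,−1,0ⁿ)ᵗ ∈ ℝ^{n+3}, ν = (0,1,−1,0ⁿ) ∈ ℝ^{(n+3)*}. Then {A ∈ g̃ : A·μ = 0 and ν·A ∈ (0,0,0,ℝⁿ)} = i'(sl(n+2,ℝ)) + ñ^{1,F}. -/

import Mathlib

open Matrix

def femIdx (n : ℕ) : Fin (n + 3) → Fin (n + 2) := fun r =>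
  if _ : r.val < 2 then ⟨r.val, by omega⟩
  else if _ : r.val = 2 then ⟨1, by omega⟩
  else ⟨r.val - 1, by have := r.isLt; omega⟩

def iPrimeMat (n : ℕ) (X : Matrix (Fin (n + 2)) (Fin (n + 2)) ℝ) :
    Matrix (Fin (n + 3)) (Fin (n + 3)) ℝ :=
  Matrix.of fun r s =>
    if s.val = 2 then (0 : ℝ) else X (femIdx n r) (femIdx n s)

def muVec (n : ℕ) : Fin (n + 3) → ℝ := fun r => if r.val = 2 then -1 else 0

def nuVec (n : ℕ) : Fin (n + 3) → ℝ := fun r =>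
  if r.val = 1 then 1 else if r.val = 2 then -1 else 0

/-- Membership in `ñ^{1,F} = ñ₁^F ⊕ ñ₂ ⊆ sl(n+3,ℝ)`: matrices (blocks (2,1,n)) with only
the (1,3)- and (2,3)-blocks possibly nonzero, i.e. supported at rows < 3 and columns ≥ 3. -/
def n1FMem (n : ℕ) (N : Matrix (Fin (n + 3)) (Fin (n + 3)) ℝ) : Prop :=
  ∀ r s : Fin (n + 3), ¬(r.val < 3 ∧ 3 ≤ s.val) → N r s = 0

lemma muVec_eq (n : ℕ) : muVec n = Pi.single (⟨2, by omega⟩ : Fin (n+3)) (-1 : ℝ) := by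
  funext r
  rcases eq_or_ne r.val 2 with h|h <;> simp [muVec, Pi.single_apply, Fin.ext_iff, h]

lemma nuVec_eq (n : ℕ) : nuVec n =
    Pi.single (⟨1, by omega⟩ : Fin (n+3)) (1 : ℝ) +
    Pi.single (⟨2, by omega⟩ : Fin (n+3)) (-1 : ℝ) := by
  funext r
  simp only [nuVec, Pi.add_apply, Pi.single_apply, Fin.ext_iff]
  split_ifs <;> simp_all

lemma sa_val (n : ℕ) (i : Fin (n+2)) :
    ((⟨2, by omega⟩ : Fin (n+3)).succAbove i).val =
      if i.val < 2 then i.val else i.val + 1 := by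
  rcases lt_or_ge i.val 2 with h | h
  · rw [Fin.succAbove_of_castSucc_lt]
    · simp [h]
    · simpa [Fin.lt_iff_val_lt_val] using h
  · rw [Fin.succAbove_of_le_castSucc]
    · simp [Nat.not_lt.mpr h]
    · simpa [Fin.le_iff_val_le_val] using h

lemma sa_femIdx (n : ℕ) (r : Fin (n+3)) :
    ((⟨2, by omega⟩ : Fin (n+3)).succAbove (femIdx n r)).val =
      if r.val = 2 then 1 else r.val := by
  rw [sa_val]
  unfold femIdx
  have := r.isLt
  split_ifs <;> simp_all <;> omega

/-- `{A ∈ g̃ : A·μ = 0 and ν·A ∈ (0,0,0,ℝⁿ)} = i'(sl(n+2,ℝ)) + ñ^{1,F}`, where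
`μ = (0,0,−1,0ⁿ)ᵗ` and `ν = (0,1,−1,0ⁿ)`. -/
theorem stmt11 (n : ℕ) (A : Matrix (Fin (n + 3)) (Fin (n + 3)) ℝ) (hA : A.trace = 0) :
    (A.mulVec (muVec n) = 0 ∧
      (∀ j : Fin (n + 3), j.val < 3 → Matrix.vecMul (nuVec n) A j = 0)) ↔
    ∃ X : Matrix (Fin (n + 2)) (Fin (n + 2)) ℝ,
      ∃ N : Matrix (Fin (n + 3)) (Fin (n + 3)) ℝ,
        X.trace = 0 ∧ n1FMem n N ∧ A = iPrimeMat n X + N := by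
  set p : Fin (n+3) := ⟨2, by omega⟩ with hp
  set c1 : Fin (n+3) := ⟨1, by omega⟩ with hc1
  have hmu : ∀ B : Matrix (Fin (n+3)) (Fin (n+3)) ℝ, B.mulVec (muVec n) = fun r => B r p * (-1) := by
    intro B; rw [muVec_eq]; simp; exact funext fun r => rfl
  have hnu : ∀ B : Matrix (Fin (n+3)) (Fin (n+3)) ℝ, Matrix.vecMul (nuVec n) B
      = fun j => B c1 j - B p j := by
    intro B; rw [nuVec_eq]; rw [Matrix.add_vecMul]; funext j; simp [hp, hc1]; ring
  constructor
  · rintro ⟨h1, h2⟩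
    have hcol : ∀ r, A r p = 0 := by
      intro r
      have := congrFun h1 r
      rw [hmu] at this
      simpa using this
    have hrow : ∀ j : Fin (n+3), j.val < 3 → A c1 j = A p j := by
      intro j hj
      have := h2 j hj
      rw [hnu] at this
      simp only at this
      linarith
    set X : Matrix (Fin (n+2)) (Fin (n+2)) ℝ :=
      fun i j => A (p.succAbove i) (p.succAbove j) with hX
    have key : ∀ r s : Fin (n+3), s.val ≠ 2 →
        iPrimeMat n X r s = A (p.succAbove (femIdx n r)) s := by
      intro r s hs
      have hss : p.succAbove (femIdx n s) = s := by
        apply Fin.ext; rw [sa_femIdx]; simp [hs]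
      simp [iPrimeMat, hs, hX, hss]
    refine ⟨X, A - iPrimeMat n X, ?_, ?_, by abel⟩
    · -- trace
      have := Fin.sum_univ_succAbove (fun r => A r r) p
      have hne : Matrix.trace A = A p p + Matrix.trace X := by
        simp only [Matrix.trace, Matrix.diag] at *
        simpa [hX] using this
      rw [hA, hcol] at hne
      linarith
    · intro r s hrs
      simp only [Matrix.sub_apply]
      by_cases hs : s.val = 2
      · have : s = p := Fin.ext hs
        subst this
        simp [iPrimeMat, hcol, hs]
      · rw [key r s hs]
        by_cases hr : r.val = 2
        · have hr3 : r.val < 3 := by omega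
          have hsl : s.val < 3 := by
            by_contra h; exact hrs ⟨hr3, by omega⟩
          have : p.succAbove (femIdx n r) = c1 := by
            apply Fin.ext; rw [sa_femIdx]; simp [hr, hc1]
          rw [this, hrow s hsl]
          have : r = p := Fin.ext hr
          rw [this]; ring
        · have : p.succAbove (femIdx n r) = r := by
            apply Fin.ext; rw [sa_femIdx]; simp [hr]
          rw [this]; ring
  · rintro ⟨X, N, hX, hN, rfl⟩
    constructor
    · rw [hmu]
      funext r
      have h1 : iPrimeMat n X r p = 0 := by simp [iPrimeMat, hp]
      have h2 : N r p = 0 := hN r p (by simp [hp])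
      simp [h1, h2]
    · intro j hj
      rw [hnu]
      have hN1 : N c1 j = 0 := hN c1 j (by omega)
      have hN2 : N p j = 0 := hN p j (by omega)
      have hfem : femIdx n c1 = femIdx n p := by
        simp [femIdx, hc1, hp]
      simp [iPrimeMat, hN1, hN2, hfem]
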